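/- Let c_n = (2/π)∫_{-1}^{1} (1-x²)^{-1/4}·T_n(x)/√(1-x²) dx be the Chebyshev coefficients of f(x) = (1-x²)^{-1/4}. Then (2n+3)·c_{n+2} = (2n+1)·c_n for all n ≥ 0. -/

import Mathlib

/-!
For a weight `w = (1 - x²)^β` with `β > -1`, differentiating `(1 - x²)^(β+1) T_{n+1}` and using
`(1 - x²) T'_{n+1} = (n+1)(T_n - x T_{n+1})` and `2x T_{n+1} = T_{n+2} + T_n` gives
`w · ((n - 2β - 1) T_n - (n + 2β + 3) T_{n+2}) / 2`. The antiderivative vanishes at `±1`,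
so `(n + 2β + 3) ∫ w T_{n+2} = (n - 2β - 1) ∫ w T_n`. The coefficients `c_n` are these
moments for `β = -3/4`, up to the factor `2/π`.
-/

open Polynomial Polynomial.Chebyshev

open MeasureTheory Set

lemma Real.rpow_div_sqrt {y a : ℝ} (hy : 0 ≤ y) (ha : a ≠ 1 / 2) :
    y ^ a / √y = y ^ (a - 1 / 2) := by
  rcases hy.eq_or_lt with rfl | hpos
  · rw [Real.sqrt_zero, div_zero, Real.zero_rpow (sub_ne_zero.mpr ha)]
  · rw [Real.sqrt_eq_rpow, ← Real.rpow_sub hpos]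

lemma intervalIntegrable_one_sub_sq_rpow {β : ℝ} (hβ : -1 < β) :
    IntervalIntegrable (fun x : ℝ => (1 - x ^ 2) ^ β) volume (-1) 1 := by
  have hleft : IntervalIntegrable (fun x : ℝ => (1 + x) ^ β * (1 - x) ^ β) volume (-1) 0 := by
    have h := (intervalIntegral.intervalIntegrable_rpow' (a := 0) (b := 1) hβ).comp_add_left 1
    norm_num at h
    refine h.mul_continuousOn (ContinuousOn.rpow_const (by fun_prop) fun x hx => ?_)
    rw [uIcc_of_le (by norm_num)] at hx
    exact Or.inl (by linarith [hx.2])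
  have hright : IntervalIntegrable (fun x : ℝ => (1 + x) ^ β * (1 - x) ^ β) volume 0 1 := by
    have h := (intervalIntegral.intervalIntegrable_rpow' (a := 0) (b := 1) hβ).comp_sub_left 1
    norm_num at h
    refine h.symm.continuousOn_mul (ContinuousOn.rpow_const (by fun_prop) fun x hx => ?_)
    rw [uIcc_of_le (by norm_num)] at hx
    exact Or.inl (by linarith [hx.1])
  refine (hleft.trans hright).congr_uIoo fun x hx => ?_
  rw [uIoo_of_le (by norm_num)] at hx
  dsimp only
  rw [← Real.mul_rpow (by linarith [hx.1]) (by linarith [hx.2])]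
  ring_nf

lemma one_sub_sq_mul_eval_derivative_T_add_one (β x : ℝ) (n : ℕ) :
    (1 - x ^ 2) * (derivative (T ℝ (n + 1))).eval x - (2 * β + 2) * x * (T ℝ (n + 1)).eval x =
      ((n - 2 * β - 1) * (T ℝ n).eval x - (n + 2 * β + 3) * (T ℝ (n + 2)).eval x) / 2 := by
  have hderiv := congrArg (eval x) (one_sub_X_sq_mul_derivative_T_eq_poly_in_T (R := ℝ) n)
  have hrec := congrArg (eval x) (T_add_two ℝ n)
  simp only [eval_mul, eval_sub, eval_add, eval_one, eval_pow, eval_X, eval_intCast,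
    eval_ofNat] at hderiv hrec
  push_cast at hderiv hrec ⊢
  linear_combination hderiv + (n + 2 * β + 3) / 2 * hrec

noncomputable def chebyshevMoment (β : ℝ) (n : ℕ) : ℝ :=
  ∫ x in (-1 : ℝ)..1, (1 - x ^ 2) ^ β * (T ℝ n).eval x

lemma hasDerivAt_one_sub_sq_rpow_mul_T {β x : ℝ} (hx : x ∈ Ioo (-1 : ℝ) 1) (n : ℕ) :
    HasDerivAt (fun y => (1 - y ^ 2) ^ (β + 1) * (T ℝ (n + 1)).eval y)
      ((1 - x ^ 2) ^ β * (((n - 2 * β - 1) * (T ℝ n).eval x -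
        (n + 2 * β + 3) * (T ℝ (n + 2)).eval x) / 2)) x := by
  have hpos : 0 < 1 - x ^ 2 := by nlinarith [hx.1, hx.2]
  have hweight : HasDerivAt (fun y => (1 - y ^ 2) ^ (β + 1))
      (-(2 * x * (β + 1) * (1 - x ^ 2) ^ β)) x := by
    simpa using ((hasDerivAt_pow 2 x).const_sub 1).rpow_const (p := β + 1) (Or.inl hpos.ne')
  refine (hweight.mul ((T ℝ (n + 1)).hasDerivAt x)).congr_deriv ?_
  rw [← one_sub_sq_mul_eval_derivative_T_add_one, Real.rpow_add_one hpos.ne']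
  ring

lemma chebyshevMoment_recurrence {β : ℝ} (hβ : -1 < β) (n : ℕ) :
    (n + 2 * β + 3) * chebyshevMoment β (n + 2) = (n - 2 * β - 1) * chebyshevMoment β n := by
  have hint (k : ℤ) :
      IntervalIntegrable (fun x => (1 - x ^ 2) ^ β * (T ℝ k).eval x) volume (-1) 1 :=
    (intervalIntegrable_one_sub_sq_rpow hβ).mul_continuousOn (T ℝ k).continuousOn
  have hcont : ContinuousOn (fun y : ℝ => (1 - y ^ 2) ^ (β + 1) * (T ℝ (n + 1)).eval y)
      (Icc (-1) 1) :=
    (Continuous.rpow_const (by fun_prop) fun _ => Or.inr (by linarith)).continuousOn.mul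
      (T ℝ (n + 1)).continuousOn
  have hFTC : ∫ x in (-1 : ℝ)..1,
      ((n - 2 * β - 1) / 2 * ((1 - x ^ 2) ^ β * (T ℝ n).eval x) -
        (n + 2 * β + 3) / 2 * ((1 - x ^ 2) ^ β * (T ℝ (n + 2)).eval x)) = 0 := by
    rw [intervalIntegral.integral_eq_sub_of_hasDerivAt_of_le (by norm_num) hcont
      (fun x hx => (hasDerivAt_one_sub_sq_rpow_mul_T hx n).congr_deriv (by ring))
      (((hint n).const_mul _).sub ((hint (n + 2)).const_mul _))]
    norm_num [Real.zero_rpow (by linarith : β + 1 ≠ 0)]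
  rw [intervalIntegral.integral_sub ((hint n).const_mul _) ((hint (n + 2)).const_mul _),
    intervalIntegral.integral_const_mul, intervalIntegral.integral_const_mul] at hFTC
  simp only [chebyshevMoment]
  push_cast
  linarith

theorem chebyshev_coeff_recurrence_quarter_pow
    (c : ℕ → ℝ)
    (hc : ∀ n : ℕ, c n =
      (2 / Real.pi) *
        ∫ x in (-1 : ℝ)..1,
          (1 - x ^ 2) ^ (-(1 / 4 : ℝ)) * (T ℝ n).eval x / Real.sqrt (1 - x ^ 2))
    (n : ℕ) :
    (2 * (n : ℝ) + 3) * c (n + 2) = (2 * (n : ℝ) + 1) * c n := by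
  have hmoment (k : ℕ) : c k = 2 / Real.pi * chebyshevMoment (-(3 / 4)) k := by
    rw [hc, chebyshevMoment]
    congr 1
    refine intervalIntegral.integral_congr fun x hx => ?_
    rw [uIcc_of_le (by norm_num)] at hx
    have hy : 0 ≤ 1 - x ^ 2 := by nlinarith [hx.1, hx.2]
    rw [mul_div_right_comm, Real.rpow_div_sqrt hy (by norm_num)]
    norm_num
  have hrec := chebyshevMoment_recurrence (β := -(3 / 4)) (by norm_num) n
  rw [hmoment, hmoment]
  linear_combination 4 / Real.pi * hrec
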